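/- Let A and B be linear subspaces of ℝ^n and set B̃ = B + (A^⊥ ∩ B^⊥). Then for every a ∈ A, the reflection of a across B̃ lies in A + B: R_B̃ a ∈ A + B. -/

import Mathlib

/-! Enlarging `B` by `Aᗮ ⊓ Bᗮ` does not move the projection of a point `a ∈ A`, since that
extra piece is orthogonal both to `B` and to `a`. Hence `R_B̃ a = 2 P_B a - a ∈ A + B`. -/

/-- The reflection across a subspace `K` of Euclidean space, `R_K = 2 P_K - Id`. -/
noncomputable def reflS {n : ℕ} (K : Submodule ℝ (EuclideanSpace ℝ (Fin n)))
    (x : EuclideanSpace ℝ (Fin n)) : EuclideanSpace ℝ (Fin n) :=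
  (2:ℝ) • (Submodule.orthogonalProjectionOnto K x : EuclideanSpace ℝ (Fin n)) - x

namespace Submodule

variable {𝕜 E : Type*} [RCLike 𝕜] [NormedAddCommGroup E] [InnerProductSpace 𝕜 E]

theorem starProjection_sup_eq_of_isOrtho {K L : Submodule 𝕜 E} [K.HasOrthogonalProjection]
    [(K ⊔ L).HasOrthogonalProjection] (hKL : K ⟂ L) {v : E} (hv : v ∈ Lᗮ) :
    (K ⊔ L).starProjection v = K.starProjection v := by
  refine eq_starProjection_of_mem_of_inner_eq_zero (mem_sup_left (K.starProjection_apply_mem v))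
    fun w hw => ?_
  have hK : v - K.starProjection v ∈ Kᗮ := K.sub_starProjection_mem_orthogonal v
  have hL : v - K.starProjection v ∈ Lᗮ :=
    sub_mem hv (hKL.le (K.starProjection_apply_mem v))
  exact inner_left_of_mem_orthogonal hw (inf_orthogonal K L ▸ ⟨hK, hL⟩)

end Submodule

/-- For linear subspaces `A, B` of ℝⁿ and the enlargement `B̃ = B + (A^⊥ ∩ B^⊥)`:
the reflection across `B̃` of any point of `A` lies in `A + B`. -/
theorem stmt15 {n : ℕ} (A B : Submodule ℝ (EuclideanSpace ℝ (Fin n))) :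
    ∀ a ∈ A, reflS (B ⊔ (Aᗮ ⊓ Bᗮ)) a ∈ (A ⊔ B : Submodule ℝ (EuclideanSpace ℝ (Fin n))) := by
  intro a ha
  have hortho : B ⟂ Aᗮ ⊓ Bᗮ := Submodule.isOrtho_comm.mp inf_le_right
  have ha' : a ∈ (Aᗮ ⊓ Bᗮ)ᗮ :=
    Submodule.orthogonal_le inf_le_left (A.le_orthogonal_orthogonal ha)
  have hproj := Submodule.starProjection_sup_eq_of_isOrtho hortho ha'
  rw [reflS, ← Submodule.starProjection_apply, hproj]
  exact sub_mem (Submodule.smul_mem _ _ (Submodule.mem_sup_right (B.starProjection_apply_mem a)))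
    (Submodule.mem_sup_left ha)
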